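/- There exists a stochastic multiplayer non-zero-sum game G with three players 0, 1, 2, all with terminal reachability objectives, and threshold μ = 1, such that the answer to Stationary-Positional-NCRSP for (G, μ) is yes while the answer to Pure-NCRSP for (G, μ) is no. Concretely, in the game of Example 1, the system's stationary strategy σ₀ that moves from v_a to the terminal with payoff (1,1,0) with probability 1/2 and to the terminal with payoff (1,0,1) with probability 1/2 admits exactly one 0-fixed Nash equilibrium among positional environment profiles, whose payoff profile is (1, 1/2, 1/2); whereas for either pure choice of the system at v_a, some 0-fixed Nash equilibrium gives the system payoff 0. -/

import Mathlib

/- Common infrastructure for formalizing statements about stochastic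
   multiplayer non-zero-sum games (SMGs) and the non-cooperative rational
   synthesis problem (NCRSP), following the paper's definitions. -/

open scoped ENNReal

namespace NCRSPPaper

/-! ### Game arenas -/

/-- A stochastic multiplayer game arena with players `Fin (k+1)` (player `0`
is the system) over vertex type `V`.  A vertex with `owner v = none` is a
nature vertex; its outgoing transition probabilities are given by `prob`.
Player-controlled vertices have their possible moves given by `edge`. -/
structure Arena (k : ℕ) (V : Type) where
  owner : V → Option (Fin (k + 1))
  edge : V → V → Bool
  prob : V → V → ℚ
  init : V

variable {k : ℕ} {V : Type}

/-- The set of successors of a vertex. -/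
def Arena.next (A : Arena k V) (u : V) : Set V :=
  {v | (A.owner u = none ∧ 0 < A.prob u v) ∨ (A.owner u ≠ none ∧ A.edge u v = true)}

/-- A terminal vertex: its only outgoing edge is the self loop. -/
def Arena.terminal (A : Arena k V) (v : V) : Prop := A.next v = {v}

/-- Well-formedness of an arena: every vertex has a successor and the
nature rows are probability distributions. -/
def Arena.WF [Fintype V] (A : Arena k V) : Prop :=
  (∀ u, (A.next u).Nonempty) ∧
  ∀ u, A.owner u = none → (∀ v, 0 ≤ A.prob u v) ∧ (∑ v, A.prob u v) = 1

/-! ### Plays -/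

/-- A play is an infinite sequence of vertices. -/
abbrev Play (V : Type) := ℕ → V

/-- `infSet π` is the set of vertices occurring infinitely often in `π`. -/
def infSet (π : Play V) : Set V := {v | ∀ m, ∃ l, m ≤ l ∧ π l = v}

/-! ### Strategies -/

/-- A (behavioral, possibly history-dependent, probabilistic) strategy:
given the history of vertices strictly preceding the current one and the
current vertex, it yields a probability distribution over vertices. -/
abbrev Strategy (V : Type) := List V → V → PMF V

/-- A strategy is valid for an arena if it only assigns positive
probability to successors of the current vertex. -/
def Strategy.Valid (A : Arena k V) (σ : Strategy V) : Prop :=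
  ∀ hist u v, σ hist u v ≠ 0 → v ∈ A.next u

/-- A stationary (memoryless) strategy depends only on the current vertex. -/
def Strategy.Stationary (σ : Strategy V) : Prop :=
  ∀ h h' u, σ h u = σ h' u

/-- A pure (deterministic) strategy assigns probability 1 to a single move. -/
def Strategy.Pure (σ : Strategy V) : Prop :=
  ∀ h u, ∃ v, σ h u v = 1

/-- A positional strategy is pure and stationary. -/
def Strategy.Positional (σ : Strategy V) : Prop :=
  Strategy.Stationary σ ∧ Strategy.Pure σ

/-- A finite-state strategy is realized by a Mealy machine with finitely
many memory states. -/
def Strategy.FiniteState (σ : Strategy V) : Prop :=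
  ∃ (M : Type) (_ : Finite M) (m0 : M) (upd : M → V → M) (out : M → V → PMF V),
    ∀ h u, σ h u = out (h.foldl upd m0) u

/-- A `t`-memory strategy only depends on the most recent `t` vertices of
the history (plus the current vertex). -/
def Strategy.TMemory (t : ℕ) (σ : Strategy V) : Prop :=
  ∀ h u, σ h u = σ (h.drop (h.length - t)) u

/-- A strategy profile assigns a strategy to every player. -/
abbrev Profile (k : ℕ) (V : Type) := Fin (k + 1) → Strategy V

def Profile.Valid (A : Arena k V) (σ : Profile k V) : Prop :=
  ∀ i, Strategy.Valid A (σ i)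

/-! ### The induced probability of a set of plays -/

/-- One-step transition probability at vertex `u` with preceding history
`hist`, under strategy profile `σ`. -/
noncomputable def Arena.stepProb (A : Arena k V) (σ : Profile k V)
    (hist : List V) (u v : V) : ℝ≥0∞ :=
  match A.owner u with
  | none => ENNReal.ofReal ((A.prob u v : ℚ) : ℝ)
  | some i => σ i hist u v

/-- Probability that, starting from current vertex `u` with preceding
history `hist`, the play continues with the given finite word. -/
noncomputable def extProb (A : Arena k V) (σ : Profile k V) :
    List V → V → List V → ℝ≥0∞
  | _, _, [] => 1
  | hist, u, v :: rest => A.stepProb σ hist u v * extProb A σ (hist ++ [u]) v rest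

/-- Probability that a play starting at `s` begins with the finite word `w`. -/
noncomputable def wordProbFrom [DecidableEq V] (A : Arena k V) (σ : Profile k V)
    (s : V) : List V → ℝ≥0∞
  | [] => 1
  | v :: rest => (if v = s then 1 else 0) * extProb A σ [] v rest

/-- The cylinder of plays extending a finite word. -/
def cyl (w : List V) : Set (Play V) :=
  {π | ∀ i (h : i < w.length), π i = w.get ⟨i, h⟩}

open scoped Classical in
/-- `PrFrom A σ s O` is the probability, under the strategy profile `σ`
(and nature's probabilities), that a play starting at `s` belongs to `O`.
It is defined as the Carathéodory outer measure generated by the natural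
premeasure on cylinder sets. -/
noncomputable def PrFrom [DecidableEq V] (A : Arena k V) (σ : Profile k V)
    (s : V) : Set (Play V) → ℝ≥0∞ :=
  fun O =>
    MeasureTheory.OuterMeasure.ofFunction
      (fun S => if S = ∅ then 0
                else ⨅ (w : List V) (_ : S ⊆ cyl w), wordProbFrom A σ s w)
      (by simp) O

/-- The payoff of player `i`: probability that the objective `O i` is met,
for the play started at the initial vertex. -/
noncomputable def Pay [DecidableEq V] (A : Arena k V)
    (O : Fin (k + 1) → Set (Play V)) (σ : Profile k V) (i : Fin (k + 1)) : ℝ≥0∞ :=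
  PrFrom A σ A.init (O i)

/-! ### Equilibria and synthesis problems -/

/-- Nash equilibrium: no player has a profitable unilateral deviation. -/
def NE [DecidableEq V] (A : Arena k V) (O : Fin (k + 1) → Set (Play V))
    (σ : Profile k V) : Prop :=
  ∀ i, ∀ τ : Strategy V, Strategy.Valid A τ →
    Pay A O (Function.update σ i τ) i ≤ Pay A O σ i

/-- 0-fixed Nash equilibrium: no environment player (`i ≠ 0`) has a
profitable unilateral deviation. -/
def ZeroNE [DecidableEq V] (A : Arena k V) (O : Fin (k + 1) → Set (Play V))
    (σ : Profile k V) : Prop :=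
  ∀ i, i ≠ 0 → ∀ τ : Strategy V, Strategy.Valid A τ →
    Pay A O (Function.update σ i τ) i ≤ Pay A O σ i

/-- The (yes-instances of the) cooperative rational synthesis problem, with
all strategies restricted to class `C`:
`∃ σ̄. NE(σ̄) ∧ Pay₀(σ̄) ≥ μ`. -/
def CRSPAnswer [DecidableEq V] (A : Arena k V) (O : Fin (k + 1) → Set (Play V))
    (C : Strategy V → Prop) (μ : ℚ) : Prop :=
  ∃ σ : Profile k V, Profile.Valid A σ ∧ (∀ i, C (σ i)) ∧ NE A O σ ∧
    ENNReal.ofReal (μ : ℝ) ≤ Pay A O σ 0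

/-- The (yes-instances of the) non-cooperative rational synthesis problem,
with the system's strategy restricted to class `C0` and the environment
players' strategies restricted to class `Cenv`:
`∃ σ₀. ∀ σ̄₋₀. (0NE(σ̄) ⇒ Pay₀(σ̄) ≥ μ)`. -/
def NCRSPAnswer [DecidableEq V] (A : Arena k V) (O : Fin (k + 1) → Set (Play V))
    (C0 Cenv : Strategy V → Prop) (μ : ℚ) : Prop :=
  ∃ σ0 : Strategy V, Strategy.Valid A σ0 ∧ C0 σ0 ∧
    ∀ σ : Profile k V, σ 0 = σ0 → Profile.Valid A σ →
      (∀ i, i ≠ 0 → Cenv (σ i)) →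
      ZeroNE A O σ → ENNReal.ofReal (μ : ℝ) ≤ Pay A O σ 0

/-- The variant `NCRSP>` with strict payoff threshold. -/
def NCRSPgtAnswer [DecidableEq V] (A : Arena k V) (O : Fin (k + 1) → Set (Play V))
    (C0 Cenv : Strategy V → Prop) (μ : ℚ) : Prop :=
  ∃ σ0 : Strategy V, Strategy.Valid A σ0 ∧ C0 σ0 ∧
    ∀ σ : Profile k V, σ 0 = σ0 → Profile.Valid A σ →
      (∀ i, i ≠ 0 → Cenv (σ i)) →
      ZeroNE A O σ → ENNReal.ofReal (μ : ℝ) < Pay A O σ 0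

/-- The complement problem of `NCRSP>`:
`∀ σ₀. ∃ σ̄₋₀. (0NE(σ̄) ∧ Pay₀(σ̄) ≤ μ)`. -/
def CoNCRSPgtAnswer [DecidableEq V] (A : Arena k V) (O : Fin (k + 1) → Set (Play V))
    (C0 Cenv : Strategy V → Prop) (μ : ℚ) : Prop :=
  ∀ σ0 : Strategy V, Strategy.Valid A σ0 → C0 σ0 →
    ∃ σ : Profile k V, σ 0 = σ0 ∧ Profile.Valid A σ ∧
      (∀ i, i ≠ 0 → Cenv (σ i)) ∧
      ZeroNE A O σ ∧ Pay A O σ 0 ≤ ENNReal.ofReal (μ : ℝ)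

/-! ### Objectives -/

/-- Boolean formulas with variables drawn from `α`. -/
inductive BForm (α : Type) : Type
  | tru : BForm α
  | fls : BForm α
  | var : α → BForm α
  | not : BForm α → BForm α
  | and : BForm α → BForm α → BForm α
  | or : BForm α → BForm α → BForm α

namespace BForm

def holds {α : Type} (θ : α → Prop) : BForm α → Prop
  | tru => True
  | fls => False
  | var a => θ a
  | not f => ¬ holds θ f
  | and f g => holds θ f ∧ holds θ g
  | or f g => holds θ f ∨ holds θ g

def map {α β : Type} (f : α → β) : BForm α → BForm β
  | tru => tru
  | fls => fls
  | var a => var (f a)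
  | not g => not (map f g)
  | and g h => and (map f g) (map f h)
  | or g h => or (map f g) (map f h)

def subst {α β : Type} (f : α → BForm β) : BForm α → BForm β
  | tru => tru
  | fls => fls
  | var a => f a
  | not g => not (subst f g)
  | and g h => and (subst f g) (subst f h)
  | or g h => or (subst f g) (subst f h)

def bigOr {α : Type} : List (BForm α) → BForm α
  | [] => fls
  | f :: fs => or f (bigOr fs)

/-- An (arbitrary but fixed) encoding of Boolean formulas over `ℕ` into `ℕ`. -/
def toNat : BForm ℕ → ℕ
  | tru => Nat.pair 0 0
  | fls => Nat.pair 1 0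
  | var i => Nat.pair 2 i
  | not f => Nat.pair 3 (toNat f)
  | and f g => Nat.pair 4 (Nat.pair (toNat f) (toNat g))
  | or f g => Nat.pair 5 (Nat.pair (toNat f) (toNat g))

end BForm

/-- The Muller objective given by a Boolean formula over the vertices:
the set of plays `π` such that `inf(π) ⊨ φ`. -/
def mullerObj (φ : BForm V) : Set (Play V) :=
  {π | BForm.holds (· ∈ infSet π) φ}

/-- Terminal-reachability objective for a set `F` of (terminal) vertices. -/
def trObjS (F : Set V) : Set (Play V) := {π | ∃ m, π m ∈ F}

/-- Terminal-reachability objective, Boolean-valued version. -/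
def trObj (F : V → Bool) : Set (Play V) := trObjS {v | F v = true}

/-! ### End components -/

/-- `E` is an end component of the arena `A` regarded as an MDP of
player `i`: it is nonempty, strongly connected, every vertex of `E`
has a successor in `E`, and vertices not controlled by `i` have all
their successors in `E`. -/
def IsEndComponent (A : Arena k V) (i : Fin (k + 1)) (E : Set V) : Prop :=
  E.Nonempty ∧
  (∀ u ∈ E, ∀ v ∈ E,
    Relation.ReflTransGen (fun a b => a ∈ E ∧ b ∈ E ∧ b ∈ A.next a) u v) ∧
  (∀ v ∈ E, (A.next v ∩ E).Nonempty) ∧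
  (∀ v ∈ E, A.owner v ≠ some i → A.next v ⊆ E)

end NCRSPPaper

namespace NCRSPPaper

/-! ### A concrete machine model, resource-bounded classes, encodings -/

/-- A configuration of a machine with `s+1` states and tape alphabet
`Fin (a+3)` (symbol `0` is the blank, symbols `1`/`2` encode the input
bits `false`/`true`), on a one-way infinite tape. -/
structure Cfg (s a : ℕ) where
  q : Fin (s + 1)
  tape : ℕ → Fin (a + 3)
  pos : ℕ

def blankSym (a : ℕ) : Fin (a + 3) := ⟨0, by omega⟩

def bitSym (a : ℕ) (b : Bool) : Fin (a + 3) :=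
  if b then ⟨2, by omega⟩ else ⟨1, by omega⟩

def initCfg (s a : ℕ) (q0 : Fin (s + 1)) (x : List Bool) : Cfg s a :=
  ⟨q0, fun i => if h : i < x.length then bitSym a (x.get ⟨i, h⟩) else blankSym a, 0⟩

/-- The tape holds the output `y` (as bits, followed by a blank). -/
def readsOff {a : ℕ} (tape : ℕ → Fin (a + 3)) (y : List Bool) : Prop :=
  (∀ i : Fin y.length, tape (i : ℕ) = bitSym a (y.get i)) ∧
  tape y.length = blankSym a

/-- A deterministic Turing machine (one-way infinite single tape). -/
structure TM where
  states : ℕ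
  symbols : ℕ
  start : Fin (states + 1)
  accept : Fin (states + 1)
  step : Fin (states + 1) → Fin (symbols + 3) →
    Option (Fin (states + 1) × Fin (symbols + 3) × Bool)

namespace TM

def stepCfg (M : TM) (c : Cfg M.states M.symbols) : Option (Cfg M.states M.symbols) :=
  match M.step c.q (c.tape c.pos) with
  | none => none
  | some (q', a, mv) =>
      some ⟨q', Function.update c.tape c.pos a, if mv then c.pos + 1 else c.pos - 1⟩

def run (M : TM) (x : List Bool) : ℕ → Option (Cfg M.states M.symbols)
  | 0 => some (initCfg M.states M.symbols M.start x)
  | t + 1 => (M.run x t).bind M.stepCfg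

def Halted (M : TM) (c : Cfg M.states M.symbols) : Prop := M.stepCfg c = none

/-- `M` decides the language `L` (with no resource bound): on every input it
halts, and it halts in the accepting state iff the input is in `L`. -/
def Decides (M : TM) (L : Set (List Bool)) : Prop :=
  ∀ x, ∃ t c, M.run x t = some c ∧ M.Halted c ∧ (x ∈ L ↔ c.q = M.accept)

/-- `M` decides `L` within time `T` (as a function of the input length). -/
def DecidesInTime (M : TM) (L : Set (List Bool)) (T : ℕ → ℕ) : Prop :=
  ∀ x, ∃ t ≤ T x.length, ∃ c, M.run x t = some c ∧ M.Halted c ∧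
    (x ∈ L ↔ c.q = M.accept)

/-- `M` decides `L` within space `S`: it halts with the correct verdict and
never moves its head beyond cell `S(|x|)`. -/
def DecidesInSpace (M : TM) (L : Set (List Bool)) (S : ℕ → ℕ) : Prop :=
  ∀ x, (∃ t c, M.run x t = some c ∧ M.Halted c ∧ (x ∈ L ↔ c.q = M.accept)) ∧
    ∀ t c, M.run x t = some c → c.pos < S x.length

/-- `M` computes, on the encoded inputs `g x`, the encoded outputs `h x`,
within time `T`. -/
def ComputesOn {I : Type} (M : TM) (g h : I → List Bool) (T : ℕ → ℕ) : Prop :=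
  ∀ x, ∃ t ≤ T (g x).length, ∃ c, M.run (g x) t = some c ∧ M.Halted c ∧
    readsOff c.tape (h x)

/-- `M` computes the function `f` on all inputs within time `T`. -/
def ComputesInTime (M : TM) (f : List Bool → List Bool) (T : ℕ → ℕ) : Prop :=
  M.ComputesOn id f T

end TM

/-- A nondeterministic Turing machine. -/
structure NTM where
  states : ℕ
  symbols : ℕ
  start : Fin (states + 1)
  accept : Fin (states + 1)
  step : Fin (states + 1) → Fin (symbols + 3) →
    Finset (Fin (states + 1) × Fin (symbols + 3) × Bool)

namespace NTM

def stepRel (M : NTM) (c c' : Cfg M.states M.symbols) : Prop :=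
  ∃ r ∈ M.step c.q (c.tape c.pos),
    c' = ⟨r.1, Function.update c.tape c.pos r.2.1,
          if r.2.2 then c.pos + 1 else c.pos - 1⟩

/-- `M` has an accepting run on `x` staying within space `S`. -/
def AcceptsInSpace (M : NTM) (x : List Bool) (S : ℕ) : Prop :=
  ∃ (t : ℕ) (cs : ℕ → Cfg M.states M.symbols),
    cs 0 = initCfg M.states M.symbols M.start x ∧
    (∀ i < t, M.stepRel (cs i) (cs (i + 1))) ∧
    (cs t).q = M.accept ∧
    ∀ i ≤ t, (cs i).pos < S

/-- The nondeterministic machine `M` decides `L` within space `S`. -/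
def DecidesInSpace (M : NTM) (L : Set (List Bool)) (S : ℕ → ℕ) : Prop :=
  ∀ x, x ∈ L ↔ M.AcceptsInSpace x (S x.length)

end NTM

/-! #### Complexity classes -/

def In2EXPTIME (L : Set (List Bool)) : Prop :=
  ∃ (M : TM) (c : ℕ), M.DecidesInTime L (fun n => 2 ^ 2 ^ (n ^ c + c))

def In3EXPTIME (L : Set (List Bool)) : Prop :=
  ∃ (M : TM) (c : ℕ), M.DecidesInTime L (fun n => 2 ^ 2 ^ 2 ^ (n ^ c + c))

def InPSPACE (L : Set (List Bool)) : Prop :=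
  ∃ (M : TM) (c : ℕ), M.DecidesInSpace L (fun n => n ^ c + c)

def InEXPSPACE (L : Set (List Bool)) : Prop :=
  ∃ (M : TM) (c : ℕ), M.DecidesInSpace L (fun n => 2 ^ (n ^ c + c))

def InNEXPSPACE (L : Set (List Bool)) : Prop :=
  ∃ (M : NTM) (c : ℕ), M.DecidesInSpace L (fun n => 2 ^ (n ^ c + c))

/-- A language is undecidable if no machine decides it. -/
def Undecidable (L : Set (List Bool)) : Prop := ¬ ∃ M : TM, M.Decides L

def PolytimeComputable (f : List Bool → List Bool) : Prop :=
  ∃ (M : TM) (c : ℕ), M.ComputesInTime f (fun n => n ^ c + c)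

def PolytimeReducible (L L' : Set (List Bool)) : Prop :=
  ∃ f, PolytimeComputable f ∧ ∀ x, x ∈ L ↔ f x ∈ L'

def PSPACEHard (L' : Set (List Bool)) : Prop :=
  ∀ L, InPSPACE L → PolytimeReducible L L'

/-- The language of (the encodings of) the yes-instances of a decision
problem `P` on instances of type `I`, for an encoding `enc`. -/
def langOf {I : Type} (enc : I → List Bool) (P : I → Prop) : Set (List Bool) :=
  {w | ∃ x, enc x = w ∧ P x}

/-! #### Encoding of game instances -/

/-- A concrete encoding of an arena over `Fin n` as a natural number. -/
def encodeArena {k n : ℕ} (A : Arena k (Fin n)) : ℕ :=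
  Encodable.encode
    ( k, n,
      List.ofFn (fun v : Fin n => (A.owner v).map Fin.val),
      List.ofFn (fun v : Fin n => List.ofFn (fun w : Fin n => A.edge v w)),
      List.ofFn (fun v : Fin n => List.ofFn (fun w : Fin n => A.prob v w)),
      (A.init : ℕ) )

/-- An instance of NCRSP with Muller objectives: an SMG over vertices
`Fin n` with players `Fin (k+1)`, Muller objectives given by Boolean
formulas, and a threshold `μ ∈ [0,1]`. -/
structure MullerInstance where
  k : ℕ
  n : ℕ
  A : Arena k (Fin n)
  obj : Fin (k + 1) → BForm (Fin n)
  μ : ℚ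
  wf : A.WF
  hμ0 : 0 ≤ μ
  hμ1 : μ ≤ 1

def encodeMullerInstance (I : MullerInstance) : List Bool :=
  Nat.bits (Encodable.encode
    ( encodeArena I.A,
      List.ofFn (fun i => (BForm.map Fin.val (I.obj i)).toNat),
      Encodable.encode I.μ ))

/-- An instance of NCRSP with terminal-reachability objectives. -/
structure TRInstance where
  k : ℕ
  n : ℕ
  A : Arena k (Fin n)
  F : Fin (k + 1) → Fin n → Bool
  μ : ℚ
  wf : A.WF
  hterm : ∀ i v, F i v = true → A.terminal v
  hμ0 : 0 ≤ μ
  hμ1 : μ ≤ 1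

def encodeTRInstance (I : TRInstance) : List Bool :=
  Nat.bits (Encodable.encode
    ( encodeArena I.A,
      List.ofFn (fun i => List.ofFn (fun v => I.F i v)),
      Encodable.encode I.μ ))

/-- An instance of `t`-memory NCRSP with Muller objectives. -/
structure MullerTInstance where
  k : ℕ
  n : ℕ
  A : Arena k (Fin n)
  obj : Fin (k + 1) → BForm (Fin n)
  t : ℕ
  μ : ℚ
  wf : A.WF
  hμ0 : 0 ≤ μ
  hμ1 : μ ≤ 1

def encodeMullerTInstance (I : MullerTInstance) : List Bool :=
  Nat.bits (Encodable.encode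
    ( encodeArena I.A,
      List.ofFn (fun i => (BForm.map Fin.val (I.obj i)).toNat),
      I.t,
      Encodable.encode I.μ ))

/-- An instance of `t`-memory NCRSP on a non-stochastic game (NSMG,
no nature vertices) with terminal-reachability objectives. -/
structure TRTInstance where
  k : ℕ
  n : ℕ
  A : Arena k (Fin n)
  F : Fin (k + 1) → Fin n → Bool
  t : ℕ
  μ : ℚ
  wf : A.WF
  nonature : ∀ v, A.owner v ≠ none
  hterm : ∀ i v, F i v = true → A.terminal v
  hμ0 : 0 ≤ μ
  hμ1 : μ ≤ 1

def encodeTRTInstance (I : TRTInstance) : List Bool :=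
  Nat.bits (Encodable.encode
    ( encodeArena I.A,
      List.ofFn (fun i => List.ofFn (fun v => I.F i v)),
      I.t,
      Encodable.encode I.μ ))

end NCRSPPaper

namespace NCRSPPaper

/-! ### First-order logic over the ordered field of real numbers -/

/-- Terms over the signature `(+, ×, 0, 1)`, with de Bruijn variables. -/
inductive RTerm : Type
  | var : ℕ → RTerm
  | zero : RTerm
  | one : RTerm
  | add : RTerm → RTerm → RTerm
  | mul : RTerm → RTerm → RTerm

namespace RTerm

noncomputable def eval (ρ : ℕ → ℝ) : RTerm → ℝ
  | var i => ρ i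
  | zero => 0
  | one => 1
  | add s t => eval ρ s + eval ρ t
  | mul s t => eval ρ s * eval ρ t

def toNat : RTerm → ℕ
  | var i => Nat.pair 0 i
  | zero => Nat.pair 1 0
  | one => Nat.pair 2 0
  | add s t => Nat.pair 3 (Nat.pair (toNat s) (toNat t))
  | mul s t => Nat.pair 4 (Nat.pair (toNat s) (toNat t))

end RTerm

/-- First-order formulas over the signature `(+, ×, 0, 1, ≤)`, with de
Bruijn variables. -/
inductive RForm : Type
  | le : RTerm → RTerm → RForm
  | not : RForm → RForm
  | and : RForm → RForm → RForm
  | or : RForm → RForm → RForm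
  | ex : RForm → RForm
  | all : RForm → RForm

namespace RForm

/-- Satisfaction in the structure `(ℝ, +, ×, 0, 1, ≤)`. -/
def holds : (ℕ → ℝ) → RForm → Prop
  | ρ, le s t => RTerm.eval ρ s ≤ RTerm.eval ρ t
  | ρ, not f => ¬ holds ρ f
  | ρ, and f g => holds ρ f ∧ holds ρ g
  | ρ, or f g => holds ρ f ∨ holds ρ g
  | ρ, ex f => ∃ x : ℝ, holds (fun i => match i with | 0 => x | j + 1 => ρ j) f
  | ρ, all f => ∀ x : ℝ, holds (fun i => match i with | 0 => x | j + 1 => ρ j) f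

/-- Validity (truth in `(ℝ, +, ×, 0, 1, ≤)` under every assignment;
for sentences this is just truth). -/
def valid (f : RForm) : Prop := ∀ ρ, holds ρ f

/-- Quantifier-free formulas. -/
def QFree : RForm → Prop
  | le _ _ => True
  | not f => QFree f
  | and f g => QFree f ∧ QFree g
  | or f g => QFree f ∧ QFree g
  | ex _ => False
  | all _ => False

/-- Existential formulas: a block of existential quantifiers applied to a
quantifier-free formula (prenex form with only existential quantifiers). -/
inductive IsExistential : RForm → Prop
  | qf {f : RForm} : QFree f → IsExistential f
  | ex {f : RForm} : IsExistential f → IsExistential (RForm.ex f)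

def toNat : RForm → ℕ
  | le s t => Nat.pair 0 (Nat.pair s.toNat t.toNat)
  | not f => Nat.pair 1 (toNat f)
  | and f g => Nat.pair 2 (Nat.pair (toNat f) (toNat g))
  | or f g => Nat.pair 3 (Nat.pair (toNat f) (toNat g))
  | ex f => Nat.pair 4 (toNat f)
  | all f => Nat.pair 5 (toNat f)

end RForm

def encodeRForm (f : RForm) : List Bool := Nat.bits f.toNat

/-! ### Quantified Boolean formulas -/

/-- Truth of a prenex QBF: `qs` is the (outermost-first) list of
quantifiers (`true` = `∀`, `false` = `∃`); the quantifier at the head of a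
suffix of length `j+1` binds variable `j`. -/
def qbfHolds (φ : BForm ℕ) : List Bool → (ℕ → Bool) → Prop
  | [], ρ => BForm.holds (fun i => ρ i = true) φ
  | q :: qs, ρ =>
      if q then ∀ b : Bool, qbfHolds φ qs (Function.update ρ qs.length b)
      else ∃ b : Bool, qbfHolds φ qs (Function.update ρ qs.length b)

/-- Variables of a Boolean formula are `< m`. -/
def BForm.varsLT (m : ℕ) : BForm ℕ → Prop
  | BForm.tru => True
  | BForm.fls => True
  | BForm.var i => i < m
  | BForm.not f => f.varsLT m
  | BForm.and f g => f.varsLT m ∧ g.varsLT m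
  | BForm.or f g => f.varsLT m ∧ g.varsLT m

/-- A prenex quantified Boolean formula with `quants.length` variables. -/
structure QBFInst where
  quants : List Bool
  matrix : BForm ℕ
  wf : matrix.varsLT quants.length

def QBFInst.IsTrue (Q : QBFInst) : Prop :=
  qbfHolds Q.matrix Q.quants (fun _ => false)

def encodeQBFInst (Q : QBFInst) : List Bool :=
  Nat.bits (Encodable.encode (Q.quants, Q.matrix.toNat))

end NCRSPPaper

/-!
In the arena of Example 1, player 1 at `v₀` either stops (reaching `t_a`) or moves on to `v₁`,
where player 2 either stops (reaching `t_b`) or moves on to the system's vertex `v_a`, which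
leads to `t₁` or `t₂`. If the system flips a fair coin at `v_a`, an environment player who stops
gets nothing although moving on would give her a positive probability of winning; hence in every
0-fixed equilibrium both move on and the system wins surely. If instead the system commits to
`t₁` (resp. `t₂`), then player 2 (resp. player 1) loses nothing by stopping, and stopping is a
0-fixed equilibrium in which the system gets 0.

`PrFrom` is the outer measure generated by the probabilities of cylinders, so upper bounds come
from covers by cylinders. Lower bounds come from compactness of the space of plays: a cover of it
by cylinders has a finite subcover, and the probabilities of finitely many cylinders covering
everything add up to at least 1.
-/

namespace NCRSPPaper

open MeasureTheory Set

variable {k : ℕ} {V : Type} {A : Arena k V} {σ : Profile k V} {s : V}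

def playPrefix (π : Play V) (n : ℕ) : List V := List.ofFn fun i : Fin n => π i

theorem cyl_eq_preimage (w : List V) :
    cyl w = (fun (π : Play V) (i : Fin w.length) => π i) ⁻¹' {w.get} := by
  ext π
  simp only [cyl, mem_ofPred_eq, mem_preimage, mem_singleton_iff, funext_iff]
  exact ⟨fun h i => h i i.2, fun h i hi => h ⟨i, hi⟩⟩

theorem mem_cyl_iff {π : Play V} {w : List V} : π ∈ cyl w ↔ playPrefix π w.length = w := by
  rw [cyl_eq_preimage, mem_preimage, mem_singleton_iff, playPrefix, ← List.ofFn_inj,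
    List.ofFn_get]

theorem mem_cyl_playPrefix (π : Play V) (n : ℕ) : π ∈ cyl (playPrefix π n) :=
  fun i hi => by simp [playPrefix]

theorem playPrefix_prefix (π : Play V) {m n : ℕ} (h : m ≤ n) :
    playPrefix π m <+: playPrefix π n := by
  obtain ⟨d, rfl⟩ := Nat.exists_eq_add_of_le h
  exact ⟨List.ofFn fun i : Fin d => π (m + i), by simp [playPrefix, List.ofFn_add]⟩

theorem cyl_subset_trObjS {w : List V} {F : Set V} (h : ∃ v ∈ w, v ∈ F) :
    cyl w ⊆ trObjS F := by
  obtain ⟨v, hv, hF⟩ := h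
  obtain ⟨i, rfl⟩ := List.get_of_mem hv
  exact fun π hπ => ⟨i, by rwa [hπ i i.2]⟩

theorem isOpen_cyl [TopologicalSpace V] [DiscreteTopology V] (w : List V) :
    IsOpen (cyl w : Set (Play V)) := by
  rw [cyl_eq_preimage]
  exact (isOpen_discrete _).preimage (by fun_prop)

noncomputable def Strategy.ofChoice (c : V → V) : Strategy V := fun _ u => PMF.pure (c u)

theorem Strategy.positional_ofChoice (c : V → V) : Strategy.Positional (Strategy.ofChoice c) :=
  ⟨fun _ _ _ => rfl, fun _ u => ⟨c u, PMF.pure_apply_self _⟩⟩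

theorem Strategy.valid_ofChoice {c : V → V} (hc : ∀ u, c u ∈ A.next u) :
    Strategy.Valid A (Strategy.ofChoice c) := fun _ u v hv => by
  obtain rfl : v = c u := by_contra fun h => hv (PMF.pure_apply_of_ne _ _ h)
  exact hc u

theorem Strategy.exists_eq_pure {τ : Strategy V} (hv : Strategy.Valid A τ) (hp : Strategy.Pure τ)
    (hist : List V) (u : V) : ∃ c ∈ A.next u, τ hist u = PMF.pure c := by
  obtain ⟨c, hc⟩ := hp hist u
  refine ⟨c, hv hist u c (by simp [hc]), PMF.ext fun v => ?_⟩
  by_cases hvc : v = c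
  · rw [hvc, hc, PMF.pure_apply_self]
  · rw [PMF.pure_apply_of_ne _ _ hvc, PMF.apply_eq_zero_iff, (PMF.apply_eq_one_iff _ _).1 hc]
    exact hvc

theorem Profile.Valid.update (hσ : Profile.Valid A σ) {τ : Strategy V} (hτ : Strategy.Valid A τ)
    (i : Fin (k + 1)) : Profile.Valid A (Function.update σ i τ) := by
  intro j
  rcases eq_or_ne j i with rfl | hj
  · simpa using hτ
  · simpa [hj] using hσ j

theorem sum_stepProb [Fintype V] (hA : A.WF) (hist : List V) (u : V) :
    ∑ v, A.stepProb σ hist u v = 1 := by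
  unfold Arena.stepProb
  split
  case h_1 hu =>
    obtain ⟨hnonneg, hsum⟩ := hA.2 u hu
    rw [← ENNReal.ofReal_sum_of_nonneg fun v _ => Rat.cast_nonneg.2 (hnonneg v), ← Rat.cast_sum,
      hsum, Rat.cast_one, ENNReal.ofReal_one]
  case h_2 i _ =>
    rw [← tsum_fintype (L := SummationFilter.unconditional V), PMF.tsum_coe]

theorem sum_extProb_append_singleton [Fintype V] (hA : A.WF) (l hist : List V) (u : V) :
    ∑ v, extProb A σ hist u (l ++ [v]) = extProb A σ hist u l := by
  induction l generalizing hist u with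
  | nil => simp only [List.nil_append, extProb, mul_one, sum_stepProb hA]
  | cons a l ih => simp only [List.cons_append, extProb, ← Finset.mul_sum, ih]

variable [DecidableEq V]

open scoped Classical in
noncomputable def cylPremeasure (A : Arena k V) (σ : Profile k V) (s : V)
    (S : Set (Play V)) : ℝ≥0∞ :=
  if S = ∅ then 0 else ⨅ (w : List V) (_ : S ⊆ cyl w), wordProbFrom A σ s w

noncomputable def prOuterMeasure (A : Arena k V) (σ : Profile k V) (s : V) :
    OuterMeasure (Play V) :=
  OuterMeasure.ofFunction (cylPremeasure A σ s) (by simp [cylPremeasure])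

theorem prFrom_eq_prOuterMeasure : PrFrom A σ s = prOuterMeasure A σ s := rfl

theorem prFrom_le_wordProbFrom {O : Set (Play V)} {w : List V} (h : O ⊆ cyl w) :
    PrFrom A σ s O ≤ wordProbFrom A σ s w := by
  classical
  rw [prFrom_eq_prOuterMeasure]
  refine (OuterMeasure.ofFunction_le O).trans ?_
  rw [cylPremeasure]
  split_ifs
  · exact zero_le
  · exact iInf₂_le w h

theorem prFrom_le_one (O : Set (Play V)) : PrFrom A σ s O ≤ 1 :=
  prFrom_le_wordProbFrom (w := []) fun _ _ _ h => absurd h (Nat.not_lt_zero _)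

theorem prFrom_eq_zero_of_forall_exists_playPrefix {O : Set (Play V)} [Countable V]
    (h : ∀ π ∈ O, ∃ n, wordProbFrom A σ s (playPrefix π n) = 0) : PrFrom A σ s O = 0 := by
  have hO : O ⊆ ⋃ (w : List V) (_ : wordProbFrom A σ s w = 0), cyl w := fun π hπ => by
    obtain ⟨n, hn⟩ := h π hπ
    exact mem_iUnion₂.2 ⟨_, hn, mem_cyl_playPrefix π n⟩
  have hnull : ∀ w, wordProbFrom A σ s w = 0 → prOuterMeasure A σ s (cyl w) = 0 := fun w hw =>
    le_antisymm ((prFrom_le_wordProbFrom subset_rfl).trans hw.le) zero_le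
  rw [prFrom_eq_prOuterMeasure]
  exact measure_mono_null hO (measure_iUnion_null fun w => measure_iUnion_null (hnull w))

theorem exists_of_mem_of_wordProbFrom_ne_zero (P : List V → V → Prop) (h0 : P [] s)
    (hstep : ∀ hist u v, P hist u → A.stepProb σ hist u v ≠ 0 → P (hist ++ [u]) v)
    {w : List V} (hw : wordProbFrom A σ s w ≠ 0) {v : V} (hv : v ∈ w) : ∃ hist, P hist v := by
  have hext : ∀ l hist u, P hist u → extProb A σ hist u l ≠ 0 → ∀ v ∈ l, ∃ hist, P hist v := by
    intro l
    induction l with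
    | nil => simp
    | cons a l ih =>
      intro hist u hu hl v hv
      obtain ⟨hstep₁, hl⟩ := mul_ne_zero_iff.1 hl
      have ha := hstep hist u a hu hstep₁
      rcases List.mem_cons.1 hv with rfl | hv
      · exact ⟨_, ha⟩
      · exact ih _ a ha hl v hv
  cases w with
  | nil => simp at hv
  | cons a l =>
    obtain ⟨hs, hl⟩ := mul_ne_zero_iff.1 hw
    obtain rfl : a = s := by by_contra h; simp [h] at hs
    rcases List.mem_cons.1 hv with rfl | hv
    · exact ⟨[], h0⟩
    · exact hext l [] _ h0 hl v hv

theorem prFrom_trObjS_eq_zero [Countable V] {F : Set V}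
    (h : ∀ w, wordProbFrom A σ s w ≠ 0 → ∀ v ∈ w, v ∉ F) : PrFrom A σ s (trObjS F) = 0 := by
  refine prFrom_eq_zero_of_forall_exists_playPrefix fun π ⟨m, hm⟩ => ⟨m + 1, ?_⟩
  by_contra hne
  exact h _ hne (π m) ((List.mem_ofFn' _ _).2 ⟨⟨m, by omega⟩, rfl⟩) hm

theorem ZeroNE.pay_ne_zero {O : Fin (k + 1) → Set (Play V)} (hNE : ZeroNE A O σ)
    {i : Fin (k + 1)} (hi : i ≠ 0) {τ : Strategy V} (hτ : Strategy.Valid A τ)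
    (h : Pay A O (Function.update σ i τ) i ≠ 0) : Pay A O σ i ≠ 0 :=
  ne_bot_of_le_ne_bot h (hNE i hi τ hτ)

variable [Fintype V]

theorem sum_wordProbFrom_append_singleton (hA : A.WF) (w : List V) :
    ∑ v, wordProbFrom A σ s (w ++ [v]) = wordProbFrom A σ s w := by
  cases w with
  | nil => simp [wordProbFrom, extProb]
  | cons a l =>
    simp only [List.cons_append, wordProbFrom, ← Finset.mul_sum, sum_extProb_append_singleton hA]

theorem sum_wordProbFrom_append_ofFn (hA : A.WF) (w : List V) (d : ℕ) :
    ∑ g : Fin d → V, wordProbFrom A σ s (w ++ List.ofFn g) = wordProbFrom A σ s w := by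
  induction d with
  | zero => simp
  | succ d ih =>
    have key : ∀ (x : Fin d → V) y,
        List.ofFn ((Fin.snocEquiv fun _ => V) (y, x)) = List.ofFn x ++ [y] := by
      intro x y
      change List.ofFn (Fin.snoc x y) = _
      rw [List.ofFn_succ']
      simp
    rw [← (Fin.snocEquiv fun _ => V).sum_comp, Fintype.sum_prod_type_right]
    simpa only [key, ← List.append_assoc, sum_wordProbFrom_append_singleton hA] using ih

theorem sum_wordProbFrom_ofFn (hA : A.WF) (n : ℕ) :
    ∑ g : Fin n → V, wordProbFrom A σ s (List.ofFn g) = 1 := by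
  simpa [wordProbFrom] using sum_wordProbFrom_append_ofFn (s := s) hA [] n

theorem sum_wordProbFrom_of_prefix (hA : A.WF) {w : List V} {n : ℕ} (hw : w.length ≤ n) :
    ∑ g : Fin n → V, (if w <+: List.ofFn g then wordProbFrom A σ s (List.ofFn g) else 0) =
      wordProbFrom A σ s w := by
  obtain ⟨d, rfl⟩ := Nat.exists_eq_add_of_le hw
  have key : ∀ (a : Fin w.length → V) (b : Fin d → V),
      w <+: List.ofFn a ++ List.ofFn b ↔ a = w.get := by
    intro a b
    refine ⟨fun h => ?_, fun h => ?_⟩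
    · rw [← List.ofFn_inj, List.ofFn_get]
      exact (List.prefix_of_prefix_length_le (List.prefix_append _ _) h (by simp)).eq_of_length
        (by simp)
    · subst h
      rw [List.ofFn_get]
      exact List.prefix_append _ _
  rw [← (Fin.appendEquiv _ _).sum_comp, Fintype.sum_prod_type]
  change (∑ a, ∑ b, if w <+: List.ofFn (Fin.append a b) then
    wordProbFrom A σ s (List.ofFn (Fin.append a b)) else 0) = _
  simp [key, List.ofFn_get, sum_wordProbFrom_append_ofFn hA]

theorem one_le_sum_wordProbFrom_of_cover (hA : A.WF) {ι : Type} (t : Finset ι) (W : ι → List V)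
    (hcov : ∀ π : Play V, ∃ j ∈ t, π ∈ cyl (W j)) : 1 ≤ ∑ j ∈ t, wordProbFrom A σ s (W j) := by
  classical
  set L := t.sup fun j => (W j).length
  have hlen : ∀ j ∈ t, (W j).length ≤ L := fun j hj =>
    Finset.le_sup (f := fun j => (W j).length) hj
  have hpre : ∀ g : Fin L → V, ∃ j ∈ t, W j <+: List.ofFn g := by
    intro g
    obtain ⟨j, hj, hπ⟩ := hcov fun n => if h : n < L then g ⟨n, h⟩ else s
    refine ⟨j, hj, ?_⟩
    have := mem_cyl_iff.1 hπ ▸ playPrefix_prefix _ (hlen j hj)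
    simpa [playPrefix] using this
  calc 1 = ∑ g : Fin L → V, wordProbFrom A σ s (List.ofFn g) := (sum_wordProbFrom_ofFn hA L).symm
    _ ≤ ∑ g : Fin L → V, ∑ j ∈ t,
          if W j <+: List.ofFn g then wordProbFrom A σ s (List.ofFn g) else 0 := by
      refine Finset.sum_le_sum fun g _ => ?_
      obtain ⟨j, hj, h⟩ := hpre g
      exact (if_pos h).symm.le.trans
        (Finset.single_le_sum (f := fun j => if W j <+: List.ofFn g then _ else 0)
          (fun _ _ => zero_le) hj)
    _ = ∑ j ∈ t, wordProbFrom A σ s (W j) := by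
      rw [Finset.sum_comm]
      exact Finset.sum_congr rfl fun j hj => sum_wordProbFrom_of_prefix hA (hlen j hj)

theorem one_le_tsum_wordProbFrom_of_cover (hA : A.WF) {ι : Type} (W : ι → List V)
    (hcov : ∀ π : Play V, ∃ i, π ∈ cyl (W i)) : 1 ≤ ∑' i, wordProbFrom A σ s (W i) := by
  let _ : TopologicalSpace V := ⊥
  have _ : DiscreteTopology V := ⟨rfl⟩
  obtain ⟨t, ht⟩ := isCompact_univ.elim_finite_subcover (fun i => cyl (W i))
    (fun i => isOpen_cyl _) fun π _ => mem_iUnion.2 (hcov π)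
  calc 1 ≤ ∑ j ∈ t, wordProbFrom A σ s (W j) :=
        one_le_sum_wordProbFrom_of_cover hA t W fun π => by simpa using ht (mem_univ π)
    _ ≤ ∑' i, wordProbFrom A σ s (W i) := ENNReal.sum_le_tsum t

theorem one_le_prFrom_univ (hA : A.WF) : 1 ≤ PrFrom A σ s univ := by
  rw [prFrom_eq_prOuterMeasure, prOuterMeasure, OuterMeasure.ofFunction_apply]
  refine le_iInf₂ fun f hf => ENNReal.le_of_forall_pos_le_add fun ε hε hfin => ?_
  obtain ⟨δ, hδ, hδε⟩ := ENNReal.exists_pos_sum_of_countable (ENNReal.coe_ne_zero.2 hε.ne') ℕ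
  have happrox : ∀ n, (f n).Nonempty →
      ∃ w, f n ⊆ cyl w ∧ wordProbFrom A σ s w ≤ cylPremeasure A σ s (f n) + δ n := by
    intro n hn
    have hlt : cylPremeasure A σ s (f n) < cylPremeasure A σ s (f n) + δ n :=
      ENNReal.lt_add_right (ne_top_of_le_ne_top hfin.ne (ENNReal.le_tsum n))
        (by simpa using (hδ n).ne')
    rw [cylPremeasure, if_neg hn.ne_empty] at hlt ⊢
    obtain ⟨w, hlt⟩ := iInf_lt_iff.1 hlt
    obtain ⟨hw, hlt⟩ := iInf_lt_iff.1 hlt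
    exact ⟨w, hw, hlt.le⟩
  choose W hW using happrox
  calc 1 ≤ ∑' i : {n // (f n).Nonempty}, wordProbFrom A σ s (W i.1 i.2) := by
        refine one_le_tsum_wordProbFrom_of_cover hA _ fun π => ?_
        obtain ⟨n, hn⟩ := mem_iUnion.1 (hf (mem_univ π))
        exact ⟨⟨n, π, hn⟩, (hW n _).1 hn⟩
    _ ≤ ∑' i : {n // (f n).Nonempty}, (cylPremeasure A σ s (f i.1) + δ i.1) :=
        ENNReal.tsum_le_tsum fun i => (hW i.1 i.2).2
    _ ≤ ∑' n, (cylPremeasure A σ s (f n) + δ n) :=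
        ENNReal.tsum_comp_le_tsum_of_injective Subtype.val_injective _
    _ ≤ ∑' n, cylPremeasure A σ s (f n) + ε := by
        rw [ENNReal.tsum_add]; gcongr

theorem sum_wordProbFrom_le_prFrom (hA : A.WF) {O : Set (Play V)} {n : ℕ}
    (S : Finset (Fin n → V)) (hS : ∀ g ∈ S, cyl (List.ofFn g) ⊆ O) :
    ∑ g ∈ S, wordProbFrom A σ s (List.ofFn g) ≤ PrFrom A σ s O := by
  have hcompl : Oᶜ ⊆ ⋃ g ∈ Sᶜ, cyl (List.ofFn g) := fun π hπ =>
    mem_iUnion₂.2 ⟨fun i => π i,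
      Finset.mem_compl.2 fun hg => hπ (hS _ hg (mem_cyl_playPrefix π n)),
      mem_cyl_playPrefix π n⟩
  have hSc : PrFrom A σ s Oᶜ ≤ ∑ g ∈ Sᶜ, wordProbFrom A σ s (List.ofFn g) := by
    rw [prFrom_eq_prOuterMeasure]
    exact (measure_mono hcompl).trans ((measure_biUnion_finset_le _ _).trans
      (Finset.sum_le_sum fun g _ => prFrom_le_wordProbFrom subset_rfl))
  have htotal := sum_wordProbFrom_ofFn (σ := σ) (s := s) hA n
  rw [← Finset.sum_add_sum_compl S] at htotal
  have hfin : ∑ g ∈ Sᶜ, wordProbFrom A σ s (List.ofFn g) ≠ ⊤ :=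
    ne_top_of_le_ne_top ENNReal.one_ne_top (htotal ▸ le_add_self)
  refine ENNReal.le_of_add_le_add_right hfin ?_
  calc _ = 1 := htotal
    _ ≤ PrFrom A σ s univ := one_le_prFrom_univ hA
    _ ≤ PrFrom A σ s O + PrFrom A σ s Oᶜ := by
      rw [prFrom_eq_prOuterMeasure, ← union_compl_self O]
      exact measure_union_le _ _
    _ ≤ _ := by gcongr

theorem wordProbFrom_le_prFrom (hA : A.WF) {O : Set (Play V)} {w : List V} (h : cyl w ⊆ O) :
    wordProbFrom A σ s w ≤ PrFrom A σ s O := by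
  simpa [List.ofFn_get] using
    sum_wordProbFrom_le_prFrom (σ := σ) (s := s) hA {w.get} (by simpa [List.ofFn_get] using h)

end NCRSPPaper

namespace NCRSPPaper.Example1

/-- Vertex `0` is `v₀` (player 1), `1` is `v₁` (player 2), `2` is `v_a` (the system), and
`3, 4, 5, 6` are the terminals `t_a, t_b, t₁, t₂` with payoffs `(0,0,0), (0,1,0), (1,1,0), (1,0,1)`,
which belong to the system. -/
def succs : Fin 7 → Finset (Fin 7) := ![{1, 3}, {2, 4}, {5, 6}, {3}, {4}, {5}, {6}]

def controller : Fin 7 → Fin 3 := ![1, 2, 0, 0, 0, 0, 0]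

def arena : Arena 2 (Fin 7) where
  owner v := some (controller v)
  edge u v := decide (v ∈ succs u)
  prob _ _ := 0
  init := 0

def targets : Fin 3 → Finset (Fin 7) := ![{5, 6}, {4, 5}, {6}]

def target (i : Fin 3) (v : Fin 7) : Bool := decide (v ∈ targets i)

abbrev objective (i : Fin 3) : Set (Play (Fin 7)) := trObj (target i)

def innerVertices : Finset (Fin 7) := {0, 1, 2}

def pathTo : Fin 7 → List (Fin 7) :=
  ![[0], [0, 1], [0, 1, 2], [0, 3], [0, 1, 4], [0, 1, 2, 5], [0, 1, 2, 6]]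

@[simp]
theorem mem_next {u v : Fin 7} : v ∈ arena.next u ↔ v ∈ succs u := by
  simp [Arena.next, arena]

theorem stepProb_eq (σ : Profile 2 (Fin 7)) (hist : List (Fin 7)) (u v : Fin 7) :
    arena.stepProb σ hist u v = σ (controller u) hist u v := rfl

def advance : Fin 7 → Fin 7 := ![1, 2, 5, 3, 4, 5, 6]

def leave : Fin 7 → Fin 7 := ![3, 4, 5, 3, 4, 5, 6]

theorem advance_mem_next (u : Fin 7) : advance u ∈ arena.next u :=
  mem_next.2 (by revert u; decide)

theorem leave_mem_next (u : Fin 7) : leave u ∈ arena.next u :=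
  mem_next.2 (by revert u; decide)

theorem arena_wf : arena.WF :=
  ⟨fun u => ⟨advance u, advance_mem_next u⟩, fun u hu => by simp [arena] at hu⟩

theorem terminal_of_target {i : Fin 3} {v : Fin 7} (h : target i v = true) : arena.terminal v := by
  have : succs v = {v} := by revert h; fin_cases i <;> fin_cases v <;> decide
  ext w
  simp [this]

theorem pathTo_of_mem_succs : ∀ u ∈ innerVertices, ∀ v ∈ succs u, pathTo v = pathTo u ++ [v] := by
  decide

theorem eq_of_mem_succs : ∀ u ∉ innerVertices, ∀ v ∈ succs u, v = u := by
  decide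

theorem mem_pathTo_self : ∀ t, t ∈ pathTo t := by decide

theorem wordProbFrom_pathTo_of_mem_succs (σ : Profile 2 (Fin 7)) {u v : Fin 7}
    (hu : u ∈ innerVertices) (hv : v ∈ succs u) :
    wordProbFrom arena σ 0 (pathTo v) =
      wordProbFrom arena σ 0 (pathTo u) * arena.stepProb σ (pathTo u).dropLast u v := by
  simp only [innerVertices, Finset.mem_insert, Finset.mem_singleton] at hu
  rcases hu with rfl | rfl | rfl <;> simp [succs] at hv <;> rcases hv with rfl | rfl <;>
    simp [pathTo, wordProbFrom, extProb, mul_assoc]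

theorem wordProbFrom_pathTo_ne_zero {σ : Profile 2 (Fin 7)} (hσ : Profile.Valid arena σ)
    {w : List (Fin 7)} (hw : wordProbFrom arena σ 0 w ≠ 0) {v : Fin 7} (hv : v ∈ w) :
    wordProbFrom arena σ 0 (pathTo v) ≠ 0 := by
  -- The arena is a tree with self-loops at the leaves, so a positive-probability play reaches an
  -- inner vertex only along its tree path, with that path as history.
  let P : List (Fin 7) → Fin 7 → Prop := fun hist u =>
    wordProbFrom arena σ 0 (pathTo u) ≠ 0 ∧
      (u ∈ innerVertices → hist ++ [u] = pathTo u)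
  have hinv : ∀ hist u v, P hist u → arena.stepProb σ hist u v ≠ 0 → P (hist ++ [u]) v := by
    intro hist u v ⟨hpos, hpath⟩ hstep
    have hv : v ∈ succs u := mem_next.1 (hσ _ hist u v hstep)
    by_cases hu : u ∈ innerVertices
    · obtain rfl : hist = (pathTo u).dropLast := by rw [← hpath hu, List.dropLast_concat]
      refine ⟨?_, fun _ => ?_⟩
      · rw [wordProbFrom_pathTo_of_mem_succs σ hu hv]
        exact mul_ne_zero hpos hstep
      · rw [hpath hu, pathTo_of_mem_succs u hu v hv]
    · obtain rfl := eq_of_mem_succs u hu v hv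
      exact ⟨hpos, fun h => absurd h hu⟩
  obtain ⟨_, hP, -⟩ := exists_of_mem_of_wordProbFrom_ne_zero P
    ⟨by simp [pathTo, wordProbFrom, extProb], fun _ => rfl⟩ hinv hw hv
  exact hP

theorem pay_eq_zero {σ : Profile 2 (Fin 7)} (hσ : Profile.Valid arena σ) {i : Fin 3}
    (h : ∀ t ∈ targets i, wordProbFrom arena σ 0 (pathTo t) = 0) :
    Pay arena objective σ i = 0 :=
  prFrom_trObjS_eq_zero fun _ hw v hv hvt =>
    wordProbFrom_pathTo_ne_zero hσ hw hv (h v (by simpa [target] using hvt))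

theorem wordProbFrom_pathTo_le_pay (σ : Profile 2 (Fin 7)) {i : Fin 3} {t : Fin 7}
    (ht : t ∈ targets i) : wordProbFrom arena σ 0 (pathTo t) ≤ Pay arena objective σ i :=
  wordProbFrom_le_prFrom arena_wf (cyl_subset_trObjS ⟨t, mem_pathTo_self t, by simpa [target]⟩)

theorem wordProbFrom_pathTo_four (σ : Profile 2 (Fin 7)) :
    wordProbFrom arena σ 0 (pathTo 4) = σ 1 [] 0 1 * σ 2 [0] 1 4 := by
  simp [pathTo, wordProbFrom, extProb, stepProb_eq, controller]

theorem wordProbFrom_pathTo_five (σ : Profile 2 (Fin 7)) :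
    wordProbFrom arena σ 0 (pathTo 5) = σ 1 [] 0 1 * σ 2 [0] 1 2 * σ 0 [0, 1] 2 5 := by
  simp [pathTo, wordProbFrom, extProb, stepProb_eq, controller, mul_assoc]

theorem wordProbFrom_pathTo_six (σ : Profile 2 (Fin 7)) :
    wordProbFrom arena σ 0 (pathTo 6) = σ 1 [] 0 1 * σ 2 [0] 1 2 * σ 0 [0, 1] 2 6 := by
  simp [pathTo, wordProbFrom, extProb, stepProb_eq, controller, mul_assoc]

theorem succs_nonempty (u : Fin 7) : (succs u).Nonempty :=
  ⟨advance u, mem_next.1 (advance_mem_next u)⟩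

noncomputable def uniformStrategy : Strategy (Fin 7) := fun _ u =>
  PMF.uniformOfFinset (succs u) (succs_nonempty u)

theorem uniformStrategy_valid : Strategy.Valid arena uniformStrategy := fun _ _ _ hv =>
  mem_next.2 ((PMF.mem_support_uniformOfFinset_iff _ _).1 hv)

theorem uniformStrategy_apply_two (hist : List (Fin 7)) {v : Fin 7} (hv : v ∈ succs 2) :
    uniformStrategy hist 2 v = 2⁻¹ := by
  rw [uniformStrategy, PMF.uniformOfFinset_apply_of_mem _ hv]
  rfl

theorem player1_advances {σ : Profile 2 (Fin 7)} (hσ : Profile.Valid arena σ)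
    (h0 : σ 0 = uniformStrategy) (hp1 : Strategy.Pure (σ 1)) (hp2 : Strategy.Pure (σ 2))
    (hNE : ZeroNE arena objective σ) : σ 1 [] 0 = PMF.pure 1 := by
  obtain ⟨c, hc, h1⟩ := Strategy.exists_eq_pure (hσ 1) hp1 [] 0
  obtain ⟨c', hc', h2⟩ := Strategy.exists_eq_pure (hσ 2) hp2 [0] 1
  simp [succs] at hc hc'
  rcases hc with rfl | rfl
  · exact h1
  refine absurd (pay_eq_zero hσ ?_)
    (hNE.pay_ne_zero one_ne_zero (Strategy.valid_ofChoice advance_mem_next) ?_)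
  · simp [targets, wordProbFrom_pathTo_four, wordProbFrom_pathTo_five, h1]
  · rcases hc' with rfl | rfl
    · refine ne_bot_of_le_ne_bot ?_ (wordProbFrom_pathTo_le_pay _ (t := 5) (by decide))
      simp [wordProbFrom_pathTo_five, h0, h2, Strategy.ofChoice, advance,
        uniformStrategy_apply_two _ (by decide : (5 : Fin 7) ∈ succs 2)]
    · refine ne_bot_of_le_ne_bot ?_ (wordProbFrom_pathTo_le_pay _ (t := 4) (by decide))
      simp [wordProbFrom_pathTo_four, h2, Strategy.ofChoice, advance]

theorem player2_advances {σ : Profile 2 (Fin 7)} (hσ : Profile.Valid arena σ)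
    (h0 : σ 0 = uniformStrategy) (h1 : σ 1 [] 0 = PMF.pure 1) (hp2 : Strategy.Pure (σ 2))
    (hNE : ZeroNE arena objective σ) : σ 2 [0] 1 = PMF.pure 2 := by
  obtain ⟨c, hc, h2⟩ := Strategy.exists_eq_pure (hσ 2) hp2 [0] 1
  simp [succs] at hc
  rcases hc with rfl | rfl
  · exact h2
  refine absurd (pay_eq_zero hσ ?_)
    (hNE.pay_ne_zero (i := 2) (by decide) (Strategy.valid_ofChoice advance_mem_next) ?_)
  · simp [targets, wordProbFrom_pathTo_six, h2]
  · refine ne_bot_of_le_ne_bot ?_ (wordProbFrom_pathTo_le_pay _ (t := 6) (by decide))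
    simp [wordProbFrom_pathTo_six, h0, h1, Strategy.ofChoice, advance,
      uniformStrategy_apply_two _ (by decide : (6 : Fin 7) ∈ succs 2)]

theorem ncrsp_stationary_positional :
    NCRSPAnswer arena objective Strategy.Stationary Strategy.Positional 1 := by
  refine ⟨uniformStrategy, uniformStrategy_valid, fun _ _ _ => rfl, fun σ h0 hσ henv hNE => ?_⟩
  have h1 := player1_advances hσ h0 (henv 1 (by decide)).2 (henv 2 (by decide)).2 hNE
  have h2 := player2_advances hσ h0 h1 (henv 2 (by decide)).2 hNE
  have hsum := sum_wordProbFrom_le_prFrom (σ := σ) (s := 0) arena_wf (O := objective 0)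
    {![0, 1, 2, 5], ![0, 1, 2, 6]} (by
      simp only [Finset.mem_insert, Finset.mem_singleton]
      rintro g (rfl | rfl) <;>
        exact cyl_subset_trObjS ⟨_, (List.mem_ofFn' _ _).2 ⟨3, rfl⟩, by decide⟩)
  rw [Finset.sum_pair (by decide)] at hsum
  calc ENNReal.ofReal ((1 : ℚ) : ℝ)
      = wordProbFrom arena σ 0 (pathTo 5) + wordProbFrom arena σ 0 (pathTo 6) := by
        simp [wordProbFrom_pathTo_five, wordProbFrom_pathTo_six, h0, h1, h2,
          uniformStrategy_apply_two _ (by decide : (5 : Fin 7) ∈ succs 2),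
          uniformStrategy_apply_two _ (by decide : (6 : Fin 7) ∈ succs 2),
          ENNReal.inv_two_add_inv_two]
    _ ≤ Pay arena objective σ 0 := hsum

theorem profile_valid {σ₀ : Strategy (Fin 7)} (h₀ : Strategy.Valid arena σ₀)
    {c₁ c₂ : Fin 7 → Fin 7} (h₁ : ∀ u, c₁ u ∈ arena.next u) (h₂ : ∀ u, c₂ u ∈ arena.next u) :
    Profile.Valid arena ![σ₀, Strategy.ofChoice c₁, Strategy.ofChoice c₂] := by
  intro i
  fin_cases i
  exacts [h₀, Strategy.valid_ofChoice h₁, Strategy.valid_ofChoice h₂]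

theorem zeroNE_advance_leave {σ₀ : Strategy (Fin 7)} (h₀ : Strategy.Valid arena σ₀)
    (hd : σ₀ [0, 1] 2 = PMF.pure 5) :
    ZeroNE arena objective ![σ₀, Strategy.ofChoice advance, Strategy.ofChoice leave] ∧
      Pay arena objective ![σ₀, Strategy.ofChoice advance, Strategy.ofChoice leave] 0 = 0 := by
  have hσ := profile_valid h₀ advance_mem_next leave_mem_next
  refine ⟨fun i hi τ hτ => ?_, pay_eq_zero hσ ?_⟩
  · fin_cases i
    · exact absurd rfl hi
    · calc _ ≤ 1 := prFrom_le_one _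
        _ = wordProbFrom arena ![σ₀, Strategy.ofChoice advance, Strategy.ofChoice leave] 0
              (pathTo 4) := by
            simp [wordProbFrom_pathTo_four, Strategy.ofChoice, advance, leave]
        _ ≤ _ := wordProbFrom_pathTo_le_pay _ (by decide)
    · refine (pay_eq_zero (hσ.update hτ 2) ?_).trans_le zero_le
      simp [targets, wordProbFrom_pathTo_six, hd]
  · simp [targets, wordProbFrom_pathTo_five, wordProbFrom_pathTo_six, Strategy.ofChoice, leave]

theorem zeroNE_leave_advance {σ₀ : Strategy (Fin 7)} (h₀ : Strategy.Valid arena σ₀)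
    (hd : σ₀ [0, 1] 2 = PMF.pure 6) :
    ZeroNE arena objective ![σ₀, Strategy.ofChoice leave, Strategy.ofChoice advance] ∧
      Pay arena objective ![σ₀, Strategy.ofChoice leave, Strategy.ofChoice advance] 0 = 0 := by
  have hσ := profile_valid h₀ leave_mem_next advance_mem_next
  refine ⟨fun i hi τ hτ => ?_, pay_eq_zero hσ ?_⟩
  · fin_cases i
    · exact absurd rfl hi
    · refine (pay_eq_zero (hσ.update hτ 1) ?_).trans_le zero_le
      simp [targets, wordProbFrom_pathTo_four, wordProbFrom_pathTo_five, hd,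
        Strategy.ofChoice, advance]
    · refine (pay_eq_zero (hσ.update hτ 2) ?_).trans_le zero_le
      simp [targets, wordProbFrom_pathTo_six, Strategy.ofChoice, leave]
  · simp [targets, wordProbFrom_pathTo_five, wordProbFrom_pathTo_six, Strategy.ofChoice, leave]

theorem not_ncrsp_pure : ¬ NCRSPAnswer arena objective Strategy.Pure Strategy.Pure 1 := by
  rintro ⟨σ₀, h₀, hp₀, hsafe⟩
  obtain ⟨d, hd, hσ₀⟩ := Strategy.exists_eq_pure h₀ hp₀ [0, 1] 2
  have hpure : ∀ c₁ c₂ : Fin 7 → Fin 7, ∀ i : Fin 3, i ≠ 0 →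
      Strategy.Pure (![σ₀, Strategy.ofChoice c₁, Strategy.ofChoice c₂] i) := by
    intro c₁ c₂ i hi
    fin_cases i
    exacts [absurd rfl hi, (Strategy.positional_ofChoice c₁).2,
      (Strategy.positional_ofChoice c₂).2]
  simp [succs] at hd
  rcases hd with rfl | rfl
  · obtain ⟨hNE, hpay⟩ := zeroNE_advance_leave h₀ hσ₀
    simpa [hpay] using hsafe _ rfl (profile_valid h₀ advance_mem_next leave_mem_next)
      (hpure _ _) hNE
  · obtain ⟨hNE, hpay⟩ := zeroNE_leave_advance h₀ hσ₀
    simpa [hpay] using hsafe _ rfl (profile_valid h₀ leave_mem_next advance_mem_next)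
      (hpure _ _) hNE

end NCRSPPaper.Example1

namespace NCRSPPaper

/-- There is an SMG with three players `0, 1, 2`, all with
terminal-reachability objectives, such that with threshold `μ = 1` the
answer of Stationary-Positional-NCRSP is yes while the answer of
Pure-NCRSP is no. -/
theorem exists_SMG_SP_yes_pure_no :
    ∃ (n : ℕ) (A : Arena 2 (Fin n)) (F : Fin 3 → Fin n → Bool),
      A.WF ∧ (∀ i v, F i v = true → A.terminal v) ∧
      NCRSPAnswer A (fun i => trObj (F i))
        Strategy.Stationary Strategy.Positional 1 ∧
      ¬ NCRSPAnswer A (fun i => trObj (F i))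
        Strategy.Pure Strategy.Pure 1 :=
  ⟨7, Example1.arena, Example1.target, Example1.arena_wf, fun _ _ => Example1.terminal_of_target,
    Example1.ncrsp_stationary_positional, Example1.not_ncrsp_pure⟩

end NCRSPPaper
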